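/- arXiv:1608.04319 — 3 statements merged into one kernel-verified Lean document; each statement's English description precedes it below -/
import Mathlib

section
/- Let G be a finite simple graph with n vertices and m edges. Then NK(T2(G)) = NK(G) · Π1*(G). -/
open Finset

variable {V : Type*}

/-- The Narumi–Katayama index: the product of the degrees of all vertices. -/
def NK {W : Type*} [Fintype W] (H : SimpleGraph W) [DecidableRel H.Adj] : ℕ :=
  ∏ v, H.degree v

/-- The first Zagreb index: the sum of the squares of the degrees. -/
def M1 [Fintype V] (G : SimpleGraph V) [DecidableRel G.Adj] : ℕ :=
  ∑ v, (G.degree v) ^ 2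

/-- The multiplicative sum Zagreb index: the product over the edges of `G` of the
sum of the degrees of the two endpoints. -/
def Pi1Star [Fintype V] [DecidableEq V] (G : SimpleGraph V) [DecidableRel G.Adj] : ℕ :=
  ∏ e ∈ G.edgeFinset,
    Sym2.lift ⟨fun u v => G.degree u + G.degree v, fun u v => by simp [Nat.add_comm]⟩ e

/-- A generic transformation graph on the vertex set `V(G) ∪ E(G)`, built from a
symmetric irreflexive relation `Rvv` between vertices, a symmetric irreflexive relation
`Ree` between edges, and an incidence relation `Rve` between vertices and edges. -/
def transGraph (G : SimpleGraph V) (Rvv : V → V → Prop) (Ree : Sym2 V → Sym2 V → Prop)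
    (Rve : V → Sym2 V → Prop)
    (hvv : Symmetric Rvv) (hvv' : Irreflexive Rvv)
    (hee : Symmetric Ree) (hee' : Irreflexive Ree) :
    SimpleGraph (V ⊕ G.edgeSet) where
  Adj a b :=
    match a, b with
    | Sum.inl u, Sum.inl v => Rvv u v
    | Sum.inr e, Sum.inr f => Ree e.1 f.1
    | Sum.inl u, Sum.inr e => Rve u e.1
    | Sum.inr e, Sum.inl u => Rve u e.1
  symm := ⟨by
    rintro (u | e) (v | f) h
    · exact hvv h
    · exact h
    · exact h
    · exact hee h⟩
  loopless := ⟨by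
    rintro (u | e) h
    · exact hvv' u h
    · exact hee' e.1 h⟩

instance transGraph.instDecidableAdj (G : SimpleGraph V) (Rvv : V → V → Prop)
    (Ree : Sym2 V → Sym2 V → Prop) (Rve : V → Sym2 V → Prop)
    (h1 : Symmetric Rvv) (h2 : Irreflexive Rvv) (h3 : Symmetric Ree) (h4 : Irreflexive Ree)
    [DecidableRel Rvv] [DecidableRel Ree] [∀ u e, Decidable (Rve u e)] :
    DecidableRel (transGraph G Rvv Ree Rve h1 h2 h3 h4).Adj := fun a b =>
  match a, b with
  | Sum.inl u, Sum.inl v => inferInstanceAs (Decidable (Rvv u v))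
  | Sum.inr e, Sum.inr f => inferInstanceAs (Decidable (Ree e.1 f.1))
  | Sum.inl u, Sum.inr e => inferInstanceAs (Decidable (Rve u e.1))
  | Sum.inr e, Sum.inl u => inferInstanceAs (Decidable (Rve u e.1))

/-- Two edges (as elements of `Sym2 V`) are adjacent: distinct and sharing an endpoint. -/
abbrev shareRel : Sym2 V → Sym2 V → Prop := fun e f => e ≠ f ∧ ∃ w, w ∈ e ∧ w ∈ f

lemma shareRel_symm : Symmetric (shareRel (V := V)) :=
  fun _ _ h => ⟨h.1.symm, h.2.imp fun _ hw => ⟨hw.2, hw.1⟩⟩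

lemma shareRel_irrefl : Irreflexive (shareRel (V := V)) := fun _ h => h.1 rfl

/-- Two edges are "non-adjacent": distinct and sharing no endpoint. -/
abbrev coshareRel : Sym2 V → Sym2 V → Prop := fun e f => e ≠ f ∧ ∀ w, w ∈ e → w ∉ f

lemma coshareRel_symm : Symmetric (coshareRel (V := V)) :=
  fun _ _ h => ⟨h.1.symm, fun w hf he => h.2 w he hf⟩

lemma coshareRel_irrefl : Irreflexive (coshareRel (V := V)) := fun _ h => h.1 rfl

/-- Non-adjacency of distinct vertices. -/
abbrev coAdj (G : SimpleGraph V) : V → V → Prop := fun u v => u ≠ v ∧ ¬ G.Adj u v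

lemma coAdj_symm (G : SimpleGraph V) : Symmetric (coAdj G) :=
  fun _ _ h => ⟨h.1.symm, fun ha => h.2 ha.symm⟩

lemma coAdj_irrefl (G : SimpleGraph V) : Irreflexive (coAdj G) := fun _ h => h.1 rfl

variable [Fintype V] [DecidableEq V]

/-- The semitotal-line graph `T₂(G)`: vertices never adjacent, edges adjacent iff they share an endpoint, a vertex adjacent to an edge iff incident. -/
abbrev T2 (G : SimpleGraph V) [DecidableRel G.Adj] : SimpleGraph (V ⊕ G.edgeSet) :=
  transGraph G (fun _ _ => False) shareRel (fun u e => u ∈ e)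
    (fun _ _ h => h.elim) (fun _ h => h) shareRel_symm shareRel_irrefl

instance T2.instDecidableAdj (G : SimpleGraph V) [DecidableRel G.Adj] : DecidableRel (T2 G).Adj :=
  transGraph.instDecidableAdj _ _ _ _ _ _ _ _

/-! In `T₂(G)` a vertex `u` of `G` is adjacent exactly to its incident edges, so its degree is
`d(u)`; an edge `uv` is adjacent to its two endpoints and to the `d(u) + d(v) - 2` other edges
at `u` or `v`, so its degree is `d(u) + d(v)`. Multiplying over `V(G) ∪ E(G)` gives the identity. -/

namespace SimpleGraph

theorem degree_eq_card_adj_inl_add_card_adj_inr {α β : Type*} [Fintype α] [Fintype β]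
    (H : SimpleGraph (α ⊕ β)) [DecidableRel H.Adj] (x : α ⊕ β) :
    H.degree x = #{a | H.Adj x (.inl a)} + #{b | H.Adj x (.inr b)} := by
  simp only [← card_neighborFinset_eq_degree, neighborFinset_eq_filter, card_filter,
    Fintype.sum_sum_type]

theorem card_filter_univ_edgeSet {W : Type*} (G : SimpleGraph W) [Fintype G.edgeSet]
    (p : Sym2 W → Prop) [DecidablePred p] :
    #{e : G.edgeSet | p e} = #{e ∈ G.edgeFinset | p e} := by
  simp only [card_filter]
  exact sum_set_coe (f := fun e => if p e then 1 else 0) G.edgeSet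

variable {G : SimpleGraph V} [DecidableRel G.Adj] {a b : V}

theorem card_incidenceFinset_union_add_one (h : G.Adj a b) :
    #(G.incidenceFinset a ∪ G.incidenceFinset b) + 1 = G.degree a + G.degree b := by
  have hinter : G.incidenceFinset a ∩ G.incidenceFinset b = {s(a, b)} := by
    simp [incidenceFinset, ← Set.toFinset_inter, G.incidenceSet_inter_incidenceSet_of_adj h]
  rw [← card_incidenceFinset_eq_degree, ← card_incidenceFinset_eq_degree,
    ← card_union_add_card_inter, hinter, card_singleton]

theorem filter_shareRel_edgeFinset (h : G.Adj a b) :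
    {f ∈ G.edgeFinset | shareRel s(a, b) f} =
      (G.incidenceFinset a ∪ G.incidenceFinset b).erase s(a, b) := by
  ext f
  simp only [mem_filter, mem_edgeFinset, mem_erase, mem_union, mem_incidenceFinset,
    incidenceSet, Set.mem_ofPred_eq]
  aesop

theorem card_filter_shareRel_edgeFinset_add_two (h : G.Adj a b) :
    #{f ∈ G.edgeFinset | shareRel s(a, b) f} + 2 = G.degree a + G.degree b := by
  have hmem : s(a, b) ∈ G.incidenceFinset a ∪ G.incidenceFinset b :=
    mem_union_left _ ((G.mem_incidenceFinset _ _).2 ⟨h, Sym2.mem_mk_left a b⟩)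
  rw [filter_shareRel_edgeFinset h, ← card_incidenceFinset_union_add_one h,
    ← card_erase_add_one hmem]

end SimpleGraph

open SimpleGraph

section T2Degree

variable (G : SimpleGraph V) [DecidableRel G.Adj]

theorem T2_degree_inl (u : V) : (T2 G).degree (.inl u) = G.degree u := by
  have hV : #{v | (T2 G).Adj (.inl u) (.inl v)} = 0 :=
    card_eq_zero.2 (filter_eq_empty_iff.2 fun _ _ h => h)
  have hE : #{e : G.edgeSet | (T2 G).Adj (.inl u) (.inr e)} = #{e ∈ G.edgeFinset | u ∈ e} :=
    card_filter_univ_edgeSet G (u ∈ ·)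
  rw [degree_eq_card_adj_inl_add_card_adj_inr, hV, hE, ← incidenceFinset_eq_filter,
    card_incidenceFinset_eq_degree, zero_add]

theorem T2_degree_inr (e : G.edgeSet) :
    (T2 G).degree (.inr e) = #{f ∈ G.edgeFinset | shareRel e f} + 2 := by
  have hV : #{v | (T2 G).Adj (.inr e) (.inl v)} = 2 := by
    rw [← Sym2.card_toFinset_of_not_isDiag e.1 (G.not_isDiag_of_mem_edgeSet e.2)]
    congr 1
    ext v
    simp only [mem_filter, mem_univ, true_and, Sym2.mem_toFinset]
    rfl
  have hE : #{f : G.edgeSet | (T2 G).Adj (.inr e) (.inr f)} =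
      #{f ∈ G.edgeFinset | shareRel e f} :=
    card_filter_univ_edgeSet G (shareRel e.1)
  rw [degree_eq_card_adj_inl_add_card_adj_inr, hV, hE, add_comm]

end T2Degree

theorem stmt_1 (G : SimpleGraph V) [DecidableRel G.Adj] :
    NK (T2 G) = NK G * Pi1Star G := by
  rw [NK, NK, Pi1Star, Fintype.prod_sum_type, edgeFinset, ← prod_set_coe]
  simp only [T2_degree_inl]
  congr 1
  refine Fintype.prod_congr _ _ fun ⟨e, he⟩ => ?_
  induction e using Sym2.ind with
  | _ a b => exact (T2_degree_inr G _).trans (card_filter_shareRel_edgeFinset_add_two he)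
end

section
/- Let G be a finite simple graph with n ≥ 2 vertices and m edges. Then NK(G^{+-}) = m^n · (n-2)^m. -/
/-! In `G^{+-}` a vertex `u` of `G` is adjacent to its `deg u` neighbours and to the `m - deg u`
edges not incident to it, so it has degree `m`; an edge is adjacent to exactly the `n - 2`
vertices that are not its endpoints. -/

open Finset

variable {V : Type*}

variable [Fintype V] [DecidableEq V]

/-- The transformation graph `G^{+-}`. -/
abbrev Gpm (G : SimpleGraph V) [DecidableRel G.Adj] : SimpleGraph (V ⊕ G.edgeSet) :=
  transGraph G G.Adj (fun _ _ => False) (fun u e => u ∉ e)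
    (fun _ _ h => G.adj_symm h) (fun _ h => G.irrefl h) (fun _ _ h => h.elim) (fun _ h => h)

instance Gpm.instDecidableAdj (G : SimpleGraph V) [DecidableRel G.Adj] :
    DecidableRel (Gpm G).Adj :=
  transGraph.instDecidableAdj _ _ _ _ _ _ _ _

open SimpleGraph

section transGraph

variable {α : Type*} (G : SimpleGraph α) {Rvv : α → α → Prop} {Ree : Sym2 α → Sym2 α → Prop}
  {Rve : α → Sym2 α → Prop} (hvv : Symmetric Rvv) (hvv' : Irreflexive Rvv)
  (hee : Symmetric Ree) (hee' : Irreflexive Ree)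

theorem transGraph_degree_inl (u : α)
    [Fintype ((transGraph G Rvv Ree Rve hvv hvv' hee hee').neighborSet (.inl u))]
    [Fintype {v // Rvv u v}] [Fintype {e : G.edgeSet // Rve u e}] :
    (transGraph G Rvv Ree Rve hvv hvv' hee hee').degree (.inl u) =
      Fintype.card {v // Rvv u v} + Fintype.card {e : G.edgeSet // Rve u e} := by
  rw [← card_neighborSet_eq_degree, ← Fintype.card_sum]
  exact Fintype.card_congr ((Equiv.subtypeEquivRight fun _ => Iff.rfl).trans Equiv.subtypeSum)

theorem transGraph_degree_inr (e : G.edgeSet)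
    [Fintype ((transGraph G Rvv Ree Rve hvv hvv' hee hee').neighborSet (.inr e))]
    [Fintype {u // Rve u e}] [Fintype {f : G.edgeSet // Ree e f}] :
    (transGraph G Rvv Ree Rve hvv hvv' hee hee').degree (.inr e) =
      Fintype.card {u // Rve u e} + Fintype.card {f : G.edgeSet // Ree e f} := by
  rw [← card_neighborSet_eq_degree, ← Fintype.card_sum]
  exact Fintype.card_congr ((Equiv.subtypeEquivRight fun _ => Iff.rfl).trans Equiv.subtypeSum)

end transGraph

theorem Sym2.card_subtype_notMem_of_not_isDiag {z : Sym2 V} (hz : ¬ z.IsDiag) :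
    Fintype.card {u // u ∉ z} = Fintype.card V - 2 := by
  rw [Fintype.card_subtype_compl, ← Sym2.card_toFinset_of_not_isDiag z hz, Fintype.card_subtype]
  congr 2
  ext u
  simp

theorem SimpleGraph.card_edgeSet_subtype_notMem (G : SimpleGraph V) [DecidableRel G.Adj] (u : V) :
    Fintype.card {e : G.edgeSet // u ∉ (e : Sym2 V)} = #G.edgeFinset - G.degree u := by
  rw [Fintype.card_subtype_compl, card_edgeSet, ← card_incidenceSet_eq_degree]
  congr 1
  exact Fintype.card_congr (Equiv.subtypeSubtypeEquivSubtypeInter (· ∈ G.edgeSet) (u ∈ ·))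

theorem Gpm_degree_inl (G : SimpleGraph V) [DecidableRel G.Adj] (u : V) :
    (Gpm G).degree (.inl u) = #G.edgeFinset := by
  refine (transGraph_degree_inl ..).trans ?_
  rw [card_edgeSet_subtype_notMem]
  have hdeg : Fintype.card {v // G.Adj u v} = G.degree u := card_neighborSet_eq_degree G u
  have hle := G.degree_le_card_edgeFinset u
  omega

theorem Gpm_degree_inr (G : SimpleGraph V) [DecidableRel G.Adj] (e : G.edgeSet) :
    (Gpm G).degree (.inr e) = Fintype.card V - 2 := by
  refine (transGraph_degree_inr ..).trans ?_
  rw [Sym2.card_subtype_notMem_of_not_isDiag (G.not_isDiag_of_mem_edgeSet e.2)]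
  simp

theorem stmt_2_general (G : SimpleGraph V) [DecidableRel G.Adj] :
    NK (Gpm G) = G.edgeFinset.card ^ Fintype.card V * (Fintype.card V - 2) ^ G.edgeFinset.card := by
  simp only [NK, Fintype.prod_sum_type, Gpm_degree_inl, Gpm_degree_inr, prod_const, card_univ,
    ← G.edgeFinset_card]

theorem stmt_2 (G : SimpleGraph V) [DecidableRel G.Adj]
    (hn : 2 ≤ Fintype.card V) :
    NK (Gpm G) = G.edgeFinset.card ^ Fintype.card V * (Fintype.card V - 2) ^ G.edgeFinset.card :=
  stmt_2_general G
end

section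
/- Let G be an r-regular finite simple graph with n vertices and m edges. Then NK(G^{+-+}) = 2^n · r^n · (m+3-2r)^m. -/
open Finset

variable {V : Type*}

variable [Fintype V] [DecidableEq V]

/-- The total transformation graph `G^{+-+}`. -/
abbrev Gpmp (G : SimpleGraph V) [DecidableRel G.Adj] : SimpleGraph (V ⊕ G.edgeSet) :=
  transGraph G G.Adj coshareRel (fun u e => u ∈ e)
    (fun _ _ h => h.symm) (fun _ h => G.ne_of_adj h rfl) coshareRel_symm coshareRel_irrefl

instance Gpmp.instDecidableAdj (G : SimpleGraph V) [DecidableRel G.Adj] :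
    DecidableRel (Gpmp G).Adj :=
  transGraph.instDecidableAdj G G.Adj coshareRel (fun u e => u ∈ e)
    (fun _ _ h => h.symm) (fun _ h => G.ne_of_adj h rfl) coshareRel_symm coshareRel_irrefl

/-!
In `G^{+-+}` a vertex `u` is joined to its neighbours and to its incident edges, so its degree
is `2 deg u`. An edge `ab` is joined to its two endpoints and to the edges avoiding both `a` and
`b`; since the edges at `a` and at `b` overlap exactly in `ab`, inclusion–exclusion leaves
`m - (deg a + deg b - 1)` of those. For an `r`-regular graph this gives the degrees `2r` and
`m + 3 - 2r`, whose product is the index. The edge degree is stated additively to avoid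
truncated subtraction.
-/

namespace SimpleGraph

lemma degree_sum_eq_card_add_card {α β : Type*} [Fintype α] [Fintype β]
    (H : SimpleGraph (α ⊕ β)) [DecidableRel H.Adj] (x : α ⊕ β) :
    H.degree x = Fintype.card {a // H.Adj x (.inl a)} + Fintype.card {b // H.Adj x (.inr b)} := by
  rw [← card_neighborSet_eq_degree, ← Fintype.card_sum]
  exact Fintype.card_congr Equiv.subtypeSum

variable (G : SimpleGraph V) [DecidableRel G.Adj]

omit [DecidableEq V] in
lemma card_subtype_edgeSet (p : Sym2 V → Prop) [DecidablePred p] :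
    Fintype.card {e : G.edgeSet // p e} = #{e ∈ G.edgeFinset | p e} := by
  rw [Fintype.card_congr (Equiv.subtypeSubtypeEquivSubtypeInter (· ∈ G.edgeSet) p),
    Fintype.card_subtype]
  congr 1
  ext
  simp

lemma incidenceFinset_inter_incidenceFinset_of_adj {a b : V} (hab : G.Adj a b) :
    G.incidenceFinset a ∩ G.incidenceFinset b = {s(a, b)} := by
  rw [← coe_inj, coe_inter, coe_incidenceFinset, coe_incidenceFinset, coe_singleton,
    G.incidenceSet_inter_incidenceSet_of_adj hab]

lemma filter_coshareRel_eq_sdiff (a b : V) :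
    {t ∈ G.edgeFinset | coshareRel s(a, b) t} =
      G.edgeFinset \ (G.incidenceFinset a ∪ G.incidenceFinset b) := by
  ext t
  simp only [mem_filter, mem_sdiff, mem_union, mem_incidenceFinset, incidenceSet,
    Set.mem_sep_iff, mem_edgeFinset, coshareRel, Sym2.forall_mem_pair]
  constructor
  · rintro ⟨ht, -, ha, hb⟩
    tauto
  · rintro ⟨ht, hab⟩
    exact ⟨ht, fun h => hab (.inl ⟨ht, h ▸ Sym2.mem_mk_left a b⟩),
      fun h => hab (.inl ⟨ht, h⟩), fun h => hab (.inr ⟨ht, h⟩)⟩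

lemma card_filter_coshareRel_add_degree_add_degree {a b : V} (hab : G.Adj a b) :
    #{t ∈ G.edgeFinset | coshareRel s(a, b) t} + G.degree a + G.degree b =
      #G.edgeFinset + 1 := by
  have hunion := card_union_add_card_inter (G.incidenceFinset a) (G.incidenceFinset b)
  rw [G.incidenceFinset_inter_incidenceFinset_of_adj hab, card_singleton,
    card_incidenceFinset_eq_degree, card_incidenceFinset_eq_degree] at hunion
  have hsub := union_subset (G.incidenceFinset_subset a) (G.incidenceFinset_subset b)
  have := card_le_card hsub
  rw [filter_coshareRel_eq_sdiff, card_sdiff_of_subset hsub]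
  omega

lemma degree_Gpmp_inl (u : V) : (Gpmp G).degree (.inl u) = 2 * G.degree u := by
  rw [degree_sum_eq_card_add_card]
  have hvert : Fintype.card {v // G.Adj u v} = G.degree u := by
    rw [← card_neighborSet_eq_degree]
    rfl
  have hedge : Fintype.card {e : G.edgeSet // u ∈ e.1} = G.degree u := by
    rw [G.card_subtype_edgeSet (u ∈ ·), ← incidenceFinset_eq_filter,
      card_incidenceFinset_eq_degree]
  change Fintype.card {v // G.Adj u v} + Fintype.card {e : G.edgeSet // u ∈ e.1} = _
  omega

lemma degree_Gpmp_inr_add_degree_add_degree {a b : V} (hab : G.Adj a b) :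
    (Gpmp G).degree (.inr ⟨s(a, b), hab⟩) + G.degree a + G.degree b = #G.edgeFinset + 3 := by
  rw [degree_sum_eq_card_add_card]
  have hvert : Fintype.card {v // v ∈ s(a, b)} = 2 := by
    rw [Fintype.card_subtype, ← card_pair hab.ne]
    congr 1
    ext
    simp
  change Fintype.card {v // v ∈ s(a, b)} +
    Fintype.card {f : G.edgeSet // coshareRel s(a, b) f.1} + _ + _ = _
  rw [hvert, G.card_subtype_edgeSet (coshareRel s(a, b))]
  have := G.card_filter_coshareRel_add_degree_add_degree hab
  omega

end SimpleGraph

theorem stmt_17 (G : SimpleGraph V) [DecidableRel G.Adj]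
    (r : ℕ)
    (hreg : G.IsRegularOfDegree r) :
    NK (Gpmp G) = 2 ^ Fintype.card V * r ^ Fintype.card V * (G.edgeFinset.card + 3 - 2 * r) ^ G.edgeFinset.card := by
  have hvert (u : V) : (Gpmp G).degree (.inl u) = 2 * r := by
    rw [G.degree_Gpmp_inl, hreg u]
  have hedge (e : G.edgeSet) : (Gpmp G).degree (.inr e) = #G.edgeFinset + 3 - 2 * r := by
    obtain ⟨e, he⟩ := e
    induction e using Sym2.ind with
    | _ a b =>
      have := G.degree_Gpmp_inr_add_degree_add_degree (G.mem_edgeSet.mp he)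
      rw [hreg a, hreg b] at this
      omega
  rw [NK, Fintype.prod_sum_type]
  simp only [hvert, hedge, prod_const, card_univ, ← SimpleGraph.edgeFinset_card, mul_pow]
end
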